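/- arXiv:2203.16128 — 5 statements merged into one kernel-verified Lean document; each statement's English description precedes it below -/
import Mathlib

section
/- (Lemma 1, simplicity of roots) For every integer r ≥ 1, every i ≥ 0 and every j with 1 ≤ j ≤ r+1, the polynomial Z_{(r+1)i+j} has exactly i+1 real roots, all of which are negative and pairwise distinct (i.e., all roots of Z_{(r+1)i+j} are simple). -/
open Polynomial

/-- The partition function of the 1d classical Rydberg blockade chain with `n` sites and
blockade radius `r`:  `Z_n(y) = Σ_{m=0}^{⌊(n+r)/(r+1)⌋} C(n - r(m-1), m) y^m`. -/
noncomputable def Z (r n : ℕ) : Polynomial ℝ :=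
  ∑ m ∈ Finset.range ((n + r) / (r + 1) + 1),
    Polynomial.C ((Nat.choose (n - r * (m - 1)) m : ℝ)) * Polynomial.X ^ m

/-!
The coefficient of `y^k` in `Z_n` is `C(n + r - r k, k)`, so `Z_n` has degree `⌊(n+r)/(r+1)⌋`,
`Z_m = 1 + m y` for `m ≤ r + 1`, and Pascal's rule gives `Z_{n+r+1} = Z_{n+r} + y Z_n`.

By induction on `n`, the roots of `Z_n` are simple and negative, the `k`-th largest root of `Z_n`
increases with `n`, and the roots of `Z_n` (`p_k`) and of `Z_{n+r}` (`q_k`) interlace as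
`0 > q₁ > p₁ > q₂ > p₂ > ⋯`. At `0` and at the `p_k` the polynomial `Z_{n+r+1}` equals `Z_{n+r}`,
and at the `q_k` it equals `y Z_n`; by interlacing these values alternate in sign, so the
intermediate value theorem puts a root of `Z_{n+r+1}` in each of `deg Z_{n+r+1}` disjoint
intervals (the last one unbounded below when `Z_{n+r}` has no root there), and these are all
of its roots.
-/

open Filter Asymptotics

theorem mul_neg_of_neg_one_pow_mul_pos {R : Type*} [CommRing R] [LinearOrder R]
    [IsStrictOrderedRing R] {a b : R} (j : ℕ) (ha : 0 < (-1) ^ (j + 1) * a)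
    (hb : 0 < (-1) ^ j * b) : a * b < 0 := by
  rcases neg_one_pow_eq_or R j with h | h <;>
    simp only [pow_succ, h] at ha hb <;> nlinarith

theorem Polynomial.exists_isRoot_Ioo_of_eval_mul_neg {p : ℝ[X]} {a b : ℝ} (hab : a < b)
    (h : p.eval a * p.eval b < 0) : ∃ c ∈ Set.Ioo a b, p.IsRoot c := by
  have hcont := p.continuous.continuousOn (s := Set.Icc a b)
  rcases mul_neg_iff.1 h with ⟨ha, hb⟩ | ⟨ha, hb⟩
  · exact intermediate_value_Ioo' hab.le hcont ⟨hb, ha⟩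
  · exact intermediate_value_Ioo hab.le hcont ⟨ha, hb⟩

theorem Polynomial.exists_lt_neg_one_pow_mul_eval_pos {p : ℝ[X]} (hlc : 0 < p.leadingCoeff)
    (b : ℝ) : ∃ t < b, 0 < (-1) ^ p.natDegree * p.eval t := by
  have hequiv : (fun t => (-1) ^ p.natDegree * p.eval t) ~[atBot]
      fun t => p.leadingCoeff * (-t) ^ p.natDegree := by
    refine ((IsEquivalent.refl (u := fun _ => (-1 : ℝ) ^ p.natDegree)).mul
      p.isEquivalent_atBot_lead).congr_right (Eventually.of_forall fun t => ?_)
    simp only [Pi.mul_apply, neg_pow t]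
    ring
  have hpos : ∀ᶠ t in atBot, 0 < (-1) ^ p.natDegree * p.eval t :=
    hequiv.eventually_pos <| (eventually_lt_atBot 0).mono fun t ht =>
      mul_pos hlc (pow_pos (neg_pos.2 ht) _)
  obtain ⟨t, ht, htb⟩ := (hpos.and (eventually_lt_atBot b)).exists
  exact ⟨t, htb, ht⟩

/-- The sentinel `x 0 = 0` makes all roots negative and closes the first interlacing interval. -/
structure IsNegRootSeq (p : ℝ[X]) (x : ℕ → ℝ) : Prop where
  zero : x 0 = 0
  strictAntiOn : StrictAntiOn x (Set.Iic p.natDegree)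
  roots_eq : p.roots = (Finset.Ioc 0 p.natDegree).val.map x

noncomputable def rootSeq (p : ℝ[X]) (k : ℕ) : ℝ :=
  (0 :: p.roots.sort (· ≥ ·)).getD k 0

@[simp]
theorem rootSeq_zero (p : ℝ[X]) : rootSeq p 0 = 0 := rfl

namespace IsNegRootSeq

variable {p : ℝ[X]} {x : ℕ → ℝ}

theorem lt_zero (hx : IsNegRootSeq p x) {k : ℕ} (hk1 : 1 ≤ k) (hk : k ≤ p.natDegree) :
    x k < 0 :=
  hx.zero ▸ hx.strictAntiOn (Set.mem_Iic.2 (Nat.zero_le _)) hk hk1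

theorem isRoot (hx : IsNegRootSeq p x) {k : ℕ} (hk1 : 1 ≤ k) (hk : k ≤ p.natDegree) :
    p.IsRoot (x k) := by
  have hp : p ≠ 0 := by rintro rfl; simp at hk; omega
  refine (mem_roots hp).1 (hx.roots_eq ▸ Multiset.mem_map_of_mem _ ?_)
  simp only [Finset.mem_val, Finset.mem_Ioc]
  omega

theorem card_roots (hx : IsNegRootSeq p x) : p.roots.card = p.natDegree := by
  simp [hx.roots_eq]

theorem nodup_roots (hx : IsNegRootSeq p x) : p.roots.Nodup :=
  hx.roots_eq ▸ (Finset.nodup _).map_on fun _ ha _ hb =>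
    hx.strictAntiOn.injOn (Set.mem_Iic.2 (Finset.mem_Ioc.1 ha).2)
      (Set.mem_Iic.2 (Finset.mem_Ioc.1 hb).2)

theorem lt_zero_of_mem_roots (hx : IsNegRootSeq p x) {a : ℝ} (ha : a ∈ p.roots) : a < 0 := by
  rw [hx.roots_eq, Multiset.mem_map] at ha
  obtain ⟨k, hk, rfl⟩ := ha
  rw [Finset.mem_val, Finset.mem_Ioc] at hk
  exact hx.lt_zero hk.1 hk.2

theorem exists_finset_roots (hx : IsNegRootSeq p x) (hp : p ≠ 0) :
    ∃ S : Finset ℝ, S.card = p.natDegree ∧ (∀ y ∈ S, y < 0) ∧ (∀ y, p.IsRoot y ↔ y ∈ S) ∧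
      ∀ y ∈ S, p.rootMultiplicity y = 1 := by
  classical
  refine ⟨p.roots.toFinset, ?_, fun y hy => ?_, fun y => ?_, fun y hy => ?_⟩
  · rw [Multiset.toFinset_card_of_nodup hx.nodup_roots, hx.card_roots]
  · exact hx.lt_zero_of_mem_roots (Multiset.mem_toFinset.1 hy)
  · rw [Multiset.mem_toFinset, mem_roots hp]
  · rw [← count_roots, Multiset.count_eq_one_of_mem hx.nodup_roots (Multiset.mem_toFinset.1 hy)]

theorem eval_eq (hx : IsNegRootSeq p x) (t : ℝ) :
    p.eval t = p.leadingCoeff * ∏ k ∈ Finset.Ioc 0 p.natDegree, (t - x k) := by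
  conv_lhs => rw [← C_leadingCoeff_mul_prod_multiset_X_sub_C hx.card_roots]
  simp [eval_prod, hx.roots_eq]

theorem neg_one_pow_mul_eval_pos (hx : IsNegRootSeq p x) (hlc : 0 < p.leadingCoeff)
    {t : ℝ} {K : ℕ} (hK : K ≤ p.natDegree) (hlt : 1 ≤ K → t < x K)
    (hgt : K < p.natDegree → x (K + 1) < t) :
    0 < (-1) ^ K * p.eval t := by
  have hanti := hx.strictAntiOn.antitoneOn
  have hleft : 0 < ∏ k ∈ Finset.Ioc 0 K, (x k - t) := Finset.prod_pos fun k hk => by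
    rw [Finset.mem_Ioc] at hk
    have : x K ≤ x k := hanti (Set.mem_Iic.2 (by omega)) (Set.mem_Iic.2 hK) hk.2
    linarith [hlt (by omega)]
  have hright : 0 < ∏ k ∈ Finset.Ioc K p.natDegree, (t - x k) := Finset.prod_pos fun k hk => by
    rw [Finset.mem_Ioc] at hk
    have : x k ≤ x (K + 1) := hanti (Set.mem_Iic.2 (by omega)) (Set.mem_Iic.2 hk.2) hk.1
    linarith [hgt (by omega)]
  have hflip : ∏ k ∈ Finset.Ioc 0 K, (x k - t) = (-1) ^ K * ∏ k ∈ Finset.Ioc 0 K, (t - x k) := by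
    simp_rw [← neg_sub t, Finset.prod_neg, Nat.card_Ioc, Nat.sub_zero]
  rw [hx.eval_eq, ← Finset.prod_Ioc_consecutive _ (Nat.zero_le K) hK]
  calc 0 < p.leadingCoeff * (∏ k ∈ Finset.Ioc 0 K, (x k - t)) *
        ∏ k ∈ Finset.Ioc K p.natDegree, (t - x k) := by positivity
    _ = _ := by rw [hflip]; ring

theorem rootSeq_eq (hx : IsNegRootSeq p x) {k : ℕ} (hk : k ≤ p.natDegree) :
    rootSeq p k = x k := by
  have hsort : p.roots.sort (· ≥ ·) = (List.range' 1 p.natDegree).map x := by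
    refine List.Perm.eq_of_pairwise' (Multiset.pairwise_sort _ _) ?_ ?_
    · rw [List.pairwise_map]
      refine (List.pairwise_lt_range' 1).imp_of_mem fun ha hb hab => ?_
      rw [List.mem_range'_1] at ha hb
      exact hx.strictAntiOn.antitoneOn (Set.mem_Iic.2 (by omega)) (Set.mem_Iic.2 (by omega))
        hab.le
    · rw [← Multiset.coe_eq_coe, Multiset.sort_eq, hx.roots_eq]
      rfl
  rcases k with _ | j
  · exact hx.zero.symm
  · rw [rootSeq, hsort, List.getD_cons_succ, List.getD_eq_getElem _ _ (by simp; omega)]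
    simp [add_comm]

theorem isNegRootSeq_rootSeq (hx : IsNegRootSeq p x) : IsNegRootSeq p (rootSeq p) where
  zero := rootSeq_zero p
  strictAntiOn := hx.strictAntiOn.congr fun _ hk => (hx.rootSeq_eq hk).symm
  roots_eq := by
    rw [hx.roots_eq]
    exact Multiset.map_congr rfl fun k hk => (hx.rootSeq_eq (Finset.mem_Ioc.1 hk).2).symm

end IsNegRootSeq

theorem isNegRootSeq_C_mul_X_add_C_one {a : ℝ} (ha : 0 < a) :
    IsNegRootSeq (C a * X + C 1) (fun k => if k = 0 then 0 else -a⁻¹) where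
  zero := if_pos rfl
  strictAntiOn := by
    rw [natDegree_linear ha.ne']
    intro i hi j hj hij
    simp only [Set.mem_Iic] at hi hj
    simp [show i = 0 by omega, show j = 1 by omega, ha]
  roots_eq := by
    rw [natDegree_linear ha.ne', roots_C_mul_X_add_C _ ha.ne']
    simp

theorem exists_isNegRootSeq_of_sign_changes {p : ℝ[X]} {lo hi : ℕ → ℝ} (hhi : hi 1 ≤ 0)
    (hlt : ∀ k, 1 ≤ k → k ≤ p.natDegree → lo k < hi k)
    (hsign : ∀ k, 1 ≤ k → k ≤ p.natDegree → p.eval (lo k) * p.eval (hi k) < 0)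
    (hsep : ∀ k, 1 ≤ k → k < p.natDegree → hi (k + 1) ≤ lo k) :
    ∃ x, IsNegRootSeq p x ∧ ∀ k, 1 ≤ k → k ≤ p.natDegree → lo k < x k ∧ x k < hi k := by
  have hroot : ∀ k, ∃ c, (k = 0 → c = 0) ∧
      (1 ≤ k → k ≤ p.natDegree → lo k < c ∧ c < hi k ∧ p.IsRoot c) := by
    intro k
    by_cases hk : 1 ≤ k ∧ k ≤ p.natDegree
    · obtain ⟨c, ⟨hc₁, hc₂⟩, hc⟩ :=
        exists_isRoot_Ioo_of_eval_mul_neg (hlt k hk.1 hk.2) (hsign k hk.1 hk.2)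
      exact ⟨c, by omega, fun _ _ => ⟨hc₁, hc₂, hc⟩⟩
    · exact ⟨0, fun _ => rfl, fun h₁ h₂ => absurd ⟨h₁, h₂⟩ hk⟩
  choose x hx0 hx using hroot
  have hanti : StrictAntiOn x (Set.Iic p.natDegree) := by
    refine strictAntiOn_Iic_of_succ_lt fun k hk => ?_
    rw [Order.succ_eq_add_one]
    rcases Nat.eq_zero_or_pos k with rfl | hk1
    · simpa [hx0 0 rfl] using (hx 1 le_rfl hk).2.1.trans_le hhi
    · linarith [(hx (k + 1) (by omega) hk).2.1, hsep k hk1 hk, (hx k hk1 hk.le).1]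
  have hnodup : ((Finset.Ioc 0 p.natDegree).val.map x).Nodup :=
    (Finset.nodup _).map_on fun _ ha _ hb =>
      hanti.injOn (Set.mem_Iic.2 (Finset.mem_Ioc.1 ha).2) (Set.mem_Iic.2 (Finset.mem_Ioc.1 hb).2)
  have hle : (Finset.Ioc 0 p.natDegree).val.map x ≤ p.roots := by
    refine (Multiset.le_iff_subset hnodup).2 fun a ha => ?_
    obtain ⟨k, hk, rfl⟩ := Multiset.mem_map.1 ha
    rw [Finset.mem_val, Finset.mem_Ioc] at hk
    have hp : p ≠ 0 := by rintro rfl; simp at hk; omega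
    exact (mem_roots hp).2 (hx k hk.1 hk.2).2.2
  refine ⟨x, ⟨hx0 0 rfl, hanti, (Multiset.eq_of_le_of_card_le hle ?_).symm⟩,
    fun k hk1 hk => ⟨(hx k hk1 hk).1, (hx k hk1 hk).2.1⟩⟩
  simpa using card_roots' p

def RootSeqLT (p q : ℝ[X]) : Prop :=
  ∀ k, 1 ≤ k → k ≤ p.natDegree → rootSeq p k < rootSeq q k

def RootSeqSuccLT (q p : ℝ[X]) : Prop :=
  ∀ k, 1 ≤ k → k + 1 ≤ q.natDegree → rootSeq q (k + 1) < rootSeq p k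

theorem RootSeqLT.trans {p q s : ℝ[X]} (hpq : RootSeqLT p q) (hqs : RootSeqLT q s)
    (hdeg : p.natDegree ≤ q.natDegree) : RootSeqLT p s :=
  fun k hk1 hk => (hpq k hk1 hk).trans (hqs k hk1 (hk.trans hdeg))

/-- Simple negative roots interlacing as `0 > q₁ > p₁ > q₂ > p₂ > ⋯`. -/
structure Interlace (p q : ℝ[X]) : Prop where
  isNegRootSeq_left : IsNegRootSeq p (rootSeq p)
  isNegRootSeq_right : IsNegRootSeq q (rootSeq q)
  leadingCoeff_left_pos : 0 < p.leadingCoeff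
  leadingCoeff_right_pos : 0 < q.leadingCoeff
  natDegree_le : p.natDegree ≤ q.natDegree
  natDegree_le_add_one : q.natDegree ≤ p.natDegree + 1
  rootSeqLT : RootSeqLT p q
  rootSeqSuccLT : RootSeqSuccLT q p

namespace Interlace

variable {p q : ℝ[X]}

theorem rootSeq_right_lt_rootSeq_left_sub_one (h : Interlace p q) {k : ℕ} (hk1 : 1 ≤ k)
    (hk : k ≤ q.natDegree) : rootSeq q k < rootSeq p (k - 1) := by
  rcases Nat.eq_zero_or_pos (k - 1) with hk0 | hk0
  · rw [hk0, rootSeq_zero]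
    exact h.isNegRootSeq_right.lt_zero hk1 hk
  · simpa [show k - 1 + 1 = k by omega] using h.rootSeqSuccLT (k - 1) hk0 (by omega)

theorem neg_one_pow_mul_eval_add_X_mul_left_pos (h : Interlace p q) {j : ℕ}
    (hj : j ≤ p.natDegree) : 0 < (-1) ^ j * (q + X * p).eval (rootSeq p j) := by
  have hvanish : rootSeq p j * p.eval (rootSeq p j) = 0 := by
    rcases Nat.eq_zero_or_pos j with rfl | hj1
    · rw [rootSeq_zero, zero_mul]
    · rw [(h.isNegRootSeq_left.isRoot hj1 hj).eq_zero, mul_zero]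
  rw [eval_add, eval_mul, eval_X, hvanish, add_zero]
  exact h.isNegRootSeq_right.neg_one_pow_mul_eval_pos h.leadingCoeff_right_pos
    (hj.trans h.natDegree_le) (fun hj1 => h.rootSeqLT j hj1 hj)
    fun hjq => by simpa using h.rootSeq_right_lt_rootSeq_left_sub_one (k := j + 1) (by omega) hjq

theorem neg_one_pow_mul_eval_add_X_mul_right_pos (h : Interlace p q) {k : ℕ} (hk1 : 1 ≤ k)
    (hk : k ≤ q.natDegree) : 0 < (-1) ^ k * (q + X * p).eval (rootSeq q k) := by
  obtain ⟨j, rfl⟩ : ∃ j, k = j + 1 := ⟨k - 1, by omega⟩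
  have hp : 0 < (-1) ^ j * p.eval (rootSeq q (j + 1)) :=
    h.isNegRootSeq_left.neg_one_pow_mul_eval_pos h.leadingCoeff_left_pos
      (by linarith [h.natDegree_le_add_one]) (fun hj1 => by simpa using h.rootSeqSuccLT j hj1 hk)
      fun hjp => h.rootSeqLT (j + 1) (by omega) hjp
  have hneg : rootSeq q (j + 1) < 0 := h.isNegRootSeq_right.lt_zero hk1 hk
  rw [eval_add, eval_mul, eval_X, (h.isNegRootSeq_right.isRoot hk1 hk).eq_zero, zero_add, pow_succ]
  nlinarith

theorem add_X_mul (h : Interlace p q) (hs_lc : 0 < (q + X * p).leadingCoeff)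
    (hs_deg : (q + X * p).natDegree = p.natDegree + 1) :
    IsNegRootSeq (q + X * p) (rootSeq (q + X * p)) ∧ RootSeqLT q (q + X * p) ∧
      RootSeqSuccLT (q + X * p) p := by
  have hpq := h.natDegree_le
  have hqp := h.natDegree_le_add_one
  -- lower end of the last interval when `q` has no root below the last root of `p`
  obtain ⟨t, ht, hst⟩ := exists_lt_neg_one_pow_mul_eval_pos hs_lc (rootSeq p p.natDegree)
  rw [hs_deg] at hst
  obtain ⟨z, hz, hzb⟩ := exists_isNegRootSeq_of_sign_changes (p := q + X * p)
    (lo := fun k => if k ≤ q.natDegree then rootSeq q k else t)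
    (hi := fun k => rootSeq p (k - 1)) (by simp)
    (by
      intro k hk1 hk
      split_ifs with hkq
      · exact h.rootSeq_right_lt_rootSeq_left_sub_one hk1 hkq
      · rwa [show k - 1 = p.natDegree by omega])
    (by
      intro k hk1 hk
      obtain ⟨j, rfl⟩ : ∃ j, k = j + 1 := ⟨k - 1, by omega⟩
      refine mul_neg_of_neg_one_pow_mul_pos j ?_
        (by simpa using h.neg_one_pow_mul_eval_add_X_mul_left_pos (j := j) (by omega))
      split_ifs with hkq
      · exact h.neg_one_pow_mul_eval_add_X_mul_right_pos hk1 hkq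
      · rwa [show j = p.natDegree by omega])
    (by
      intro k hk1 hk
      simp only [Nat.add_sub_cancel, if_pos (show k ≤ q.natDegree by omega)]
      exact (h.rootSeqLT k hk1 (by omega)).le)
  refine ⟨hz.isNegRootSeq_rootSeq, fun k hk1 hk => ?_, fun k hk1 hk => ?_⟩
  · rw [hz.rootSeq_eq (by omega)]
    simpa [if_pos hk] using (hzb k hk1 (by omega)).1
  · rw [hz.rootSeq_eq hk]
    simpa using (hzb (k + 1) (by omega) hk).2

end Interlace

section Rydberg

variable {r : ℕ}

theorem choose_eq_zero_of_div_lt {n k : ℕ} (hk : (n + r) / (r + 1) < k) :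
    (n + r - r * k).choose k = 0 := by
  have hk0 : 0 < k := (Nat.zero_le _).trans_lt hk
  rw [Nat.div_lt_iff_lt_mul r.succ_pos, Nat.mul_succ, mul_comm] at hk
  exact Nat.choose_eq_zero_of_lt (by omega)

theorem div_le_sub_mul_div (r n : ℕ) : (n + r) / (r + 1) ≤ n + r - r * ((n + r) / (r + 1)) := by
  have := Nat.div_mul_le_self (n + r) (r + 1)
  rw [Nat.mul_succ, mul_comm] at this
  omega

theorem coeff_Z (r n k : ℕ) : (Z r n).coeff k = ((n + r - r * k).choose k : ℝ) := by
  simp only [Z, finsetSum_coeff, coeff_C_mul_X_pow, Finset.sum_ite_eq, Finset.mem_range,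
    Nat.lt_succ_iff]
  split_ifs with hk
  · rcases k with _ | k
    · simp
    · rw [Nat.add_sub_cancel, mul_add_one, show n + r - (r * k + r) = n - r * k by omega]
  · rw [choose_eq_zero_of_div_lt (by omega), Nat.cast_zero]

theorem natDegree_Z (r n : ℕ) : (Z r n).natDegree = (n + r) / (r + 1) := by
  refine natDegree_eq_of_le_of_coeff_ne_zero
    (natDegree_sum_le_of_forall_le _ _ fun m hm => ?_) ?_
  · exact (natDegree_C_mul_X_pow_le _ m).trans (Nat.lt_succ_iff.1 (Finset.mem_range.1 hm))
  · rw [coeff_Z, Nat.cast_ne_zero]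
    exact (Nat.choose_pos (div_le_sub_mul_div r n)).ne'

theorem leadingCoeff_Z_pos (r n : ℕ) : 0 < (Z r n).leadingCoeff := by
  rw [leadingCoeff, natDegree_Z, coeff_Z]
  exact_mod_cast Nat.choose_pos (div_le_sub_mul_div r n)

theorem Z_add_add_one (r n : ℕ) : Z r (n + r + 1) = Z r (n + r) + X * Z r n := by
  ext k
  rcases k with _ | k
  · simp [coeff_Z]
  rw [coeff_add, coeff_X_mul, coeff_Z, coeff_Z, coeff_Z, mul_add_one]
  rcases le_or_gt (r * k) (n + r) with h | h
  · rw [show n + r + 1 + r - (r * k + r) = n + r - r * k + 1 by omega,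
      show n + r + r - (r * k + r) = n + r - r * k by omega, Nat.choose_succ_succ']
    push_cast
    ring
  · have hk : k ≠ 0 := by rintro rfl; simp at h
    rw [show n + r + 1 + r - (r * k + r) = 0 by omega, show n + r + r - (r * k + r) = 0 by omega,
      show n + r - r * k = 0 by omega]
    simp [Nat.choose_eq_zero_of_lt (Nat.pos_of_ne_zero hk)]

theorem Z_eq_of_le {m : ℕ} (hm : m ≤ r + 1) : Z r m = C (m : ℝ) * X + C 1 := by
  ext k
  rcases k with _ | _ | k
  · simp [coeff_Z]
  · simp [coeff_Z, coeff_one]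
  · rw [coeff_Z, Nat.choose_eq_zero_of_lt (by rw [mul_add, mul_add]; omega)]
    simp [coeff_one]

theorem natDegree_Z_mono {m n : ℕ} (h : m ≤ n) : (Z r m).natDegree ≤ (Z r n).natDegree := by
  simp only [natDegree_Z]
  exact Nat.div_le_div_right (by omega)

theorem natDegree_Z_add_add_one (n : ℕ) :
    (Z r (n + r + 1)).natDegree = (Z r n).natDegree + 1 := by
  rw [natDegree_Z, natDegree_Z, show n + r + 1 + r = n + r + (r + 1) by ring,
    Nat.add_div_right _ r.succ_pos]

theorem natDegree_Z_eq_one {m : ℕ} (hm1 : 1 ≤ m) (hm : m ≤ r + 1) : (Z r m).natDegree = 1 := by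
  rw [natDegree_Z, Nat.div_eq_of_lt_le (k := 1) (by omega) (by omega)]

theorem isNegRootSeq_Z_of_le {m : ℕ} (hm1 : 1 ≤ m) (hm : m ≤ r + 1) :
    IsNegRootSeq (Z r m) (fun k => if k = 0 then 0 else -(m : ℝ)⁻¹) :=
  Z_eq_of_le hm ▸ isNegRootSeq_C_mul_X_add_C_one (by positivity)

structure RootsInvariant (r c : ℕ) : Prop where
  isNegRootSeq : ∀ m ≤ c, IsNegRootSeq (Z r m) (rootSeq (Z r m))
  rootSeqLT_succ : ∀ m, m + 1 ≤ c → RootSeqLT (Z r m) (Z r (m + 1))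
  rootSeqSuccLT : ∀ m, m + r ≤ c → RootSeqSuccLT (Z r (m + r)) (Z r m)

namespace RootsInvariant

variable {c : ℕ}

theorem zero : RootsInvariant r 0 where
  isNegRootSeq m hm := by
    obtain rfl : m = 0 := by omega
    rw [Z_eq_of_le (Nat.zero_le _), Nat.cast_zero, C_0, zero_mul, zero_add]
    refine ⟨rfl, fun a ha b hb hab => ?_, by simp⟩
    simp only [natDegree_C, Set.mem_Iic] at ha hb
    omega
  rootSeqLT_succ m hm := by omega
  rootSeqSuccLT m hm k hk1 hk := by
    obtain ⟨rfl, rfl⟩ : m = 0 ∧ r = 0 := by omega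
    simp [natDegree_Z] at hk

theorem succ (h : RootsInvariant r c)
    (hroots : IsNegRootSeq (Z r (c + 1)) (rootSeq (Z r (c + 1))))
    (hlt : RootSeqLT (Z r c) (Z r (c + 1)))
    (hsucc : ∀ m, m + r = c + 1 → RootSeqSuccLT (Z r (m + r)) (Z r m)) :
    RootsInvariant r (c + 1) where
  isNegRootSeq m hm := by
    rcases hm.lt_or_eq with hm | rfl
    · exact h.isNegRootSeq m (by omega)
    · exact hroots
  rootSeqLT_succ m hm := by
    rcases hm.lt_or_eq with hm | hm
    · exact h.rootSeqLT_succ m (by omega)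
    · obtain rfl : m = c := by omega
      exact hlt
  rootSeqSuccLT m hm := by
    rcases hm.lt_or_eq with hm | hm
    · exact h.rootSeqSuccLT m (by omega)
    · exact hsucc m hm

theorem rootSeqLT_add (h : RootsInvariant r c) {m j : ℕ} (hj : 1 ≤ j) (hmj : m + j ≤ c) :
    RootSeqLT (Z r m) (Z r (m + j)) := by
  induction j, hj using Nat.le_induction with
  | base => exact h.rootSeqLT_succ m hmj
  | succ j hj ih =>
    exact (ih (by omega)).trans (h.rootSeqLT_succ (m + j) hmj) (natDegree_Z_mono (by omega))

theorem succ_of_lt (h : RootsInvariant r c) (hc : c < r) : RootsInvariant r (c + 1) := by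
  have hZ := isNegRootSeq_Z_of_le (r := r) (m := c + 1) (by omega) (by omega)
  refine h.succ hZ.isNegRootSeq_rootSeq (fun k hk1 hk => ?_) (fun m hm k hk1 hk => ?_)
  · have hc1 : 1 ≤ c := by
      by_contra
      obtain rfl : c = 0 := by omega
      rw [natDegree_Z, zero_add, Nat.div_eq_of_lt r.lt_succ_self] at hk
      omega
    have hZc := isNegRootSeq_Z_of_le (r := r) hc1 (by omega)
    rw [natDegree_Z_eq_one hc1 (by omega)] at hk
    obtain rfl : k = 1 := by omega
    rw [hZc.rootSeq_eq (by rw [natDegree_Z_eq_one hc1 (by omega)]),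
      hZ.rootSeq_eq (by rw [natDegree_Z_eq_one (by omega) (by omega)])]
    simp only [one_ne_zero, if_false, Nat.cast_add_one, neg_lt_neg_iff]
    gcongr
    linarith
  · rw [natDegree_Z_eq_one (by omega) (by omega)] at hk
    omega

theorem succ_add (hr : 1 ≤ r) {n : ℕ} (h : RootsInvariant r (n + r)) :
    RootsInvariant r (n + r + 1) := by
  have hdeg := natDegree_Z_add_add_one (r := r) n
  have hinter : Interlace (Z r n) (Z r (n + r)) :=
    ⟨h.isNegRootSeq n (by omega), h.isNegRootSeq (n + r) le_rfl, leadingCoeff_Z_pos r n,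
      leadingCoeff_Z_pos r (n + r), natDegree_Z_mono (by omega),
      (natDegree_Z_mono (by omega)).trans hdeg.le, h.rootSeqLT_add hr le_rfl,
      h.rootSeqSuccLT n le_rfl⟩
  rw [Z_add_add_one] at hdeg
  obtain ⟨hs, hlt, hsucc⟩ := hinter.add_X_mul (Z_add_add_one r n ▸ leadingCoeff_Z_pos r _) hdeg
  rw [← Z_add_add_one] at hs hlt hsucc hdeg
  refine h.succ hs hlt fun m hm k hk1 hk => ?_
  obtain rfl : m = n + 1 := by omega
  rw [show n + 1 + r = n + r + 1 by omega] at hk ⊢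
  exact (hsucc k hk1 hk).trans (h.rootSeqLT_succ n (by omega) k hk1 (by omega))

end RootsInvariant

theorem rootsInvariant (hr : 1 ≤ r) (c : ℕ) : RootsInvariant r c := by
  induction c with
  | zero => exact RootsInvariant.zero
  | succ c ih =>
    rcases Nat.lt_or_ge c r with hc | hc
    · exact ih.succ_of_lt hc
    · obtain ⟨n, rfl⟩ := Nat.exists_eq_add_of_le' hc
      exact ih.succ_add hr

end Rydberg

/-- Lemma 1, simplicity of roots: For every integer `r ≥ 1`, every `i ≥ 0`
and every `j` with `1 ≤ j ≤ r+1`, the polynomial `Z_{(r+1)i+j}` has exactly `i+1` real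
roots, all of which are negative and pairwise distinct (i.e. all its roots are simple). -/
theorem Z_roots_simple (r i j : ℕ) (hr : 1 ≤ r) (hj1 : 1 ≤ j) (hj2 : j ≤ r + 1) :
    ∃ S : Finset ℝ, S.card = i + 1 ∧ (∀ y ∈ S, y < 0) ∧
      (∀ y : ℝ, (Z r ((r + 1) * i + j)).IsRoot y ↔ y ∈ S) ∧
      (∀ y ∈ S, (Z r ((r + 1) * i + j)).rootMultiplicity y = 1) := by
  have hdeg : (Z r ((r + 1) * i + j)).natDegree = i + 1 := by
    rw [natDegree_Z, add_assoc, Nat.mul_add_div r.succ_pos,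
      Nat.div_eq_of_lt_le (k := 1) (by omega) (by omega)]
  rw [← hdeg]
  exact ((rootsInvariant hr _).isNegRootSeq _ le_rfl).exists_finset_roots
    (leadingCoeff_ne_zero.1 (leadingCoeff_Z_pos r _).ne')
end

section
/- For every integer r ≥ 1, every n ≥ 1, and every real y with -r^r/(r+1)^{r+1} ≤ y < 0, one has Z_n(y) > 0. -/
open Polynomial

lemma Z_eval (r n : ℕ) (y : ℝ) :
    (Z r n).eval y = ∑ m ∈ Finset.range ((n + r) / (r + 1) + 1),
      ((n - r * (m - 1)).choose m : ℝ) * y ^ m := by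
  simp [Z, eval_finset_sum]

lemma choose_vanish (r n m : ℕ) (hm : (n + r) / (r + 1) + 1 ≤ m) :
    (n - r * (m - 1)).choose m = 0 := by
  apply Nat.choose_eq_zero_of_lt
  have hm1 : 1 ≤ m := le_trans (Nat.le_add_left 1 _) hm
  have hdiv : (n + r) / (r + 1) < m := by omega
  have h : n + r < m * (r + 1) := (Nat.div_lt_iff_lt_mul (Nat.succ_pos r)).1 hdiv
  obtain ⟨j, rfl⟩ : ∃ j, m = j + 1 := ⟨m - 1, by omega⟩
  have h2 : (j + 1) * (r + 1) = j * r + j + r + 1 := by ring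
  have h3 : r * (j + 1 - 1) = j * r := by rw [Nat.add_sub_cancel, Nat.mul_comm]
  omega

lemma Z_eval_ext (r n N : ℕ) (hN : (n + r) / (r + 1) + 1 ≤ N) (y : ℝ) :
    (Z r n).eval y = ∑ m ∈ Finset.range N, ((n - r * (m - 1)).choose m : ℝ) * y ^ m := by
  rw [Z_eval]
  refine Finset.sum_subset (Finset.range_subset_range.2 hN) ?_
  intro m _ hm
  simp only [Finset.mem_range, not_lt] at hm
  rw [choose_vanish r n m hm]
  simp

lemma pascal_key (r n k : ℕ) :
    (n + r + 1 - r * k).choose (k + 1)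
      = (n + r - r * k).choose (k + 1) + (n - r * (k - 1)).choose k := by
  rcases k with _ | j
  · simp [Nat.choose_one_right]
  · have h2 : r * (j + 1) = r * j + r := by ring
    have h3 : r * (j + 1 - 1) = r * j := by rw [Nat.add_sub_cancel]
    rcases le_or_gt (r * (j + 1)) (n + r) with h | h
    · have e1 : n + r + 1 - r * (j + 1) = (n + r - r * (j + 1)) + 1 := by omega
      rw [e1, Nat.choose_succ_succ, Nat.add_comm]
      congr 2
      omega
    · have e1 : n + r + 1 - r * (j + 1) = 0 := by omega
      have e2 : n + r - r * (j + 1) = 0 := by omega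
      have e3 : n - r * (j + 1 - 1) = 0 := by omega
      rw [e1, e2, e3]
      simp

lemma Z_rec (r n : ℕ) (y : ℝ) :
    (Z r (n + r + 1)).eval y = (Z r (n + r)).eval y + y * (Z r n).eval y := by
  set N := n + 2 * r + 2 with hNdef
  have hd1 : (n + r + 1 + r) / (r + 1) + 1 ≤ N + 1 := by
    have := Nat.div_le_self (n + r + 1 + r) (r + 1)
    omega
  have hd2 : (n + r + r) / (r + 1) + 1 ≤ N + 1 := by
    have := Nat.div_le_self (n + r + r) (r + 1)
    omega
  have hd3 : (n + r) / (r + 1) + 1 ≤ N := by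
    have := Nat.div_le_self (n + r) (r + 1)
    omega
  rw [Z_eval_ext r (n + r + 1) (N + 1) hd1 y, Z_eval_ext r (n + r) (N + 1) hd2 y,
    Z_eval_ext r n N hd3 y, Finset.sum_range_succ' _ N, Finset.sum_range_succ' (fun m =>
      ((n + r - r * (m - 1)).choose m : ℝ) * y ^ m) N, Finset.mul_sum]
  simp only [Nat.add_sub_cancel, Nat.zero_sub, Nat.mul_zero, Nat.sub_zero, Nat.choose_zero_right,
    Nat.cast_one, pow_zero, mul_one]
  have key : ∀ x ∈ Finset.range N, ((n + r + 1 - r * x).choose (x + 1) : ℝ) * y ^ (x + 1)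
      = ((n + r - r * x).choose (x + 1) : ℝ) * y ^ (x + 1)
        + y * (((n - r * (x - 1)).choose x : ℝ) * y ^ x) := by
    intro x _
    rw [pascal_key r n x]
    push_cast
    ring
  rw [Finset.sum_congr rfl key, Finset.sum_add_distrib]
  ring

lemma Z_eval_small (r k : ℕ) (hk2 : k ≤ r + 1) (y : ℝ) :
    (Z r k).eval y = 1 + k * y := by
  rcases Nat.eq_zero_or_pos k with rfl | hk1
  · have hd : (0 + r) / (r + 1) = 0 := Nat.div_eq_of_lt (by omega)
    rw [Z_eval, hd]
    simp
  · have hd : (k + r) / (r + 1) = 1 := Nat.div_eq_of_lt_le (by omega) (by omega)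
    rw [Z_eval, hd, Finset.sum_range_succ, Finset.sum_range_one]
    simp

/-- For every integer `r ≥ 1`, every `n ≥ 1`, and every real `y` with
`-r^r/(r+1)^{r+1} ≤ y < 0`, one has `Z_n(y) > 0`. -/
theorem Z_pos (r n : ℕ) (hr : 1 ≤ r) (hn : 1 ≤ n) (y : ℝ)
    (hy0 : -(r : ℝ) ^ r / ((r : ℝ) + 1) ^ (r + 1) ≤ y) (hy1 : y < 0) :
    0 < (Z r n).eval y := by
  have hr0 : (0 : ℝ) < r := by exact_mod_cast hr
  have hr1 : (0 : ℝ) < (r : ℝ) + 1 := by linarith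
  set B : ℝ := (r : ℝ) ^ r / ((r : ℝ) + 1) ^ (r + 1) with hBdef
  have hBpos : 0 < B := by positivity
  have hyB : -y ≤ B := by
    rw [neg_div] at hy0
    linarith
  set ρ : ℝ := (r : ℝ) / ((r : ℝ) + 1) with hρdef
  have hρ0 : 0 < ρ := by positivity
  have hρr : ρ ^ r = (r : ℝ) ^ r / ((r : ℝ) + 1) ^ r := div_pow _ _ r
  have hBρ : B = ρ ^ r / ((r : ℝ) + 1) := by
    rw [hρr, div_div, ← pow_succ]
  -- key numeric inequality : 2 r^r ≤ (r+1)^r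
  have hpow : (2 : ℝ) ≤ (1 + 1 / (r : ℝ)) ^ r := by
    have h0 : (0 : ℝ) ≤ 1 / (r : ℝ) := by positivity
    have h := one_add_mul_le_pow (a := 1 / (r : ℝ)) (by linarith) r
    rw [mul_one_div, div_self (ne_of_gt hr0)] at h
    linarith
  have h2r : 2 * (r : ℝ) ^ r ≤ ((r : ℝ) + 1) ^ r := by
    have e : ((r : ℝ) + 1) = r * (1 + 1 / r) := by field_simp
    have hrp : (0 : ℝ) < (r : ℝ) ^ r := by positivity
    calc 2 * (r : ℝ) ^ r = (r : ℝ) ^ r * 2 := by ring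
      _ ≤ (r : ℝ) ^ r * (1 + 1 / (r : ℝ)) ^ r := by
          exact mul_le_mul_of_nonneg_left hpow hrp.le
      _ = ((r : ℝ) + 1) ^ r := by rw [e, mul_pow]
  have hrr1 : (r : ℝ) ^ r ≤ ((r : ℝ) + 1) ^ r := pow_le_pow_left₀ hr0.le (by linarith) r
  have hB2 : (2 * (r : ℝ) + 1) * B ≤ 1 := by
    have hnum : (2 * (r : ℝ) + 1) * (r : ℝ) ^ r ≤ ((r : ℝ) + 1) ^ (r + 1) := by
      rw [pow_succ]
      nlinarith [pow_pos hr0 r]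
    rw [hBdef, ← mul_div_assoc, div_le_one (by positivity)]
    exact hnum
  have hrB : (r : ℝ) * B < 1 := by nlinarith
  -- main claim by strong induction
  have main : ∀ m : ℕ, 0 < (Z r m).eval y ∧
      ρ * (Z r m).eval y ≤ (Z r (m + 1)).eval y := by
    intro m
    induction m using Nat.strong_induction_on with
    | _ m ih =>
      rcases le_or_gt m r with hm | hm
      · -- base case
        have hmr : (m : ℝ) ≤ r := by exact_mod_cast hm
        have hm0 : (0 : ℝ) ≤ m := Nat.cast_nonneg m
        have hEm : (Z r m).eval y = 1 + m * y := Z_eval_small r m (by omega) y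
        have hEm1 : (Z r (m + 1)).eval y = 1 + (m + 1) * y := by
          rw [Z_eval_small r (m + 1) (by omega) y]
          push_cast
          ring
        have hprod : ((m : ℝ) + r + 1) * (-y) ≤ (2 * (r : ℝ) + 1) * B := by
          apply mul_le_mul (by linarith) hyB (by linarith) (by linarith)
        constructor
        · rw [hEm]
          have h1 : (m : ℝ) * (-y) ≤ (r : ℝ) * (-y) :=
            mul_le_mul_of_nonneg_right hmr (by linarith)
          have h2 : (r : ℝ) * (-y) ≤ (r : ℝ) * B := mul_le_mul_of_nonneg_left hyB hr0.le
          linarith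
        · rw [hEm, hEm1, hρdef, div_mul_eq_mul_div, div_le_iff₀ hr1]
          nlinarith
      · -- inductive case
        obtain ⟨p, rfl⟩ : ∃ p, m = p + r + 1 := ⟨m - r - 1, by omega⟩
        have hprev := ih (p + r) (by omega)
        have hpos : 0 < (Z r (p + r + 1)).eval y :=
          lt_of_lt_of_le (mul_pos hρ0 hprev.1) hprev.2
        refine ⟨hpos, ?_⟩
        have hEp1pos : 0 < (Z r (p + 1)).eval y := (ih (p + 1) (by omega)).1
        have chain : ∀ j, j ≤ r → ρ ^ j * (Z r (p + 1)).eval y ≤ (Z r (p + 1 + j)).eval y := by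
          intro j
          induction j with
          | zero => intro _; simp
          | succ j hj =>
            intro hjr
            have h1 := hj (by omega)
            have h2 := (ih (p + 1 + j) (by omega)).2
            calc ρ ^ (j + 1) * (Z r (p + 1)).eval y
                = ρ * (ρ ^ j * (Z r (p + 1)).eval y) := by ring
              _ ≤ ρ * (Z r (p + 1 + j)).eval y := mul_le_mul_of_nonneg_left h1 hρ0.le
              _ ≤ (Z r (p + 1 + j + 1)).eval y := h2
        have hEpr : ρ ^ r * (Z r (p + 1)).eval y ≤ (Z r (p + r + 1)).eval y := by
          have := chain r le_rfl
          rwa [show p + 1 + r = p + r + 1 from by omega] at this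
        have hrec : (Z r (p + r + 1 + 1)).eval y
            = (Z r (p + r + 1)).eval y + y * (Z r (p + 1)).eval y := by
          have h := Z_rec r (p + 1) y
          rwa [show p + 1 + r + 1 = p + r + 1 + 1 from by omega,
            show p + 1 + r = p + r + 1 from by omega] at h
        rw [hrec]
        have hBE : (-y) * (Z r (p + 1)).eval y ≤ (Z r (p + r + 1)).eval y / ((r : ℝ) + 1) := by
          have h1 : (-y) * (Z r (p + 1)).eval y ≤ B * (Z r (p + 1)).eval y :=
            mul_le_mul_of_nonneg_right hyB hEp1pos.le
          have h2 : B * (Z r (p + 1)).eval y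
              = (ρ ^ r * (Z r (p + 1)).eval y) / ((r : ℝ) + 1) := by
            rw [hBρ]; ring
          have h3 : (ρ ^ r * (Z r (p + 1)).eval y) / ((r : ℝ) + 1)
              ≤ (Z r (p + r + 1)).eval y / ((r : ℝ) + 1) := by gcongr
          linarith
        have hρeq : ρ * (Z r (p + r + 1)).eval y
            = (Z r (p + r + 1)).eval y - (Z r (p + r + 1)).eval y / ((r : ℝ) + 1) := by
          rw [hρdef]
          field_simp
          ring
        linarith
  exact (main n).1
end

section
/- For every integer r ≥ 1, every n ≥ r+1, and every real y with -r^r/(r+1)^{r+1} ≤ y < 0, one has Z_{n+1}(y) < (1+y)·Z_n(y). -/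
open Polynomial

/-! Pascal's rule gives the recurrence `Z_{n+1} = Z_n + y Z_{n-r}`, where the
truncated `n - r` is harmless because `Z_0 = 1`. Put `c = r/(r+1)`, so that the
left end of the interval is `-c^r/(r+1)`. By strong induction `Z_{n+1} ≥ c Z_n`: iterating this
bound `r` times gives `c^r Z_{n-r} ≤ Z_n`, hence `y Z_{n-r} ≥ -Z_n/(r+1)` and
`Z_{n+1} ≥ (1 - 1/(r+1)) Z_n`. In particular all `Z_n` are positive, so for `y < 0` the recurrence
makes `Z_n` strictly decreasing; then `Z_{n-r} > Z_n` and `Z_{n+1} = Z_n + y Z_{n-r} < (1+y) Z_n`. -/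

lemma Z_eq_sum_range (r n N : ℕ) (hN : (n + r) / (r + 1) + 1 ≤ N) :
    Z r n = ∑ m ∈ Finset.range N, C ((n - r * (m - 1)).choose m : ℝ) * X ^ m := by
  refine Finset.sum_subset (Finset.range_subset_range.2 hN) fun m _ hm => ?_
  rw [Finset.mem_range, not_lt] at hm
  have hm₁ : 1 ≤ m := le_add_self.trans hm
  have hlt : n + r < m * (r + 1) := (Nat.div_lt_iff_lt_mul (by omega)).1 (by omega)
  have hrm : r * (m - 1) = r * m - r := Nat.mul_sub_one r m
  have hr_le : r ≤ r * m := Nat.le_mul_of_pos_right r hm₁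
  have hmul : m * (r + 1) = r * m + m := by ring
  rw [Nat.choose_eq_zero_of_lt (by omega : n - r * (m - 1) < m), Nat.cast_zero, C_0, zero_mul]

lemma choose_sub_mul_succ (r n m : ℕ) :
    (n + 1 - r * m).choose (m + 1) = (n - r * m).choose (m + 1) + (n - r * m).choose m := by
  rcases le_or_gt (r * m) n with h | h
  · rw [Nat.succ_sub h, Nat.choose_succ_succ', add_comm]
  · rcases m with _ | m
    · simp at h
    · simp [show n + 1 - r * (m + 1) = 0 by omega, show n - r * (m + 1) = 0 by omega]

lemma choose_sub_sub_mul_pred (r n m : ℕ) :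
    (n - r - r * (m - 1)).choose m = (n - r * m).choose m := by
  rcases m with _ | m
  · simp
  · rw [Nat.sub_sub, Nat.add_sub_cancel, show r + r * m = r * (m + 1) by ring]

lemma Z_succ (r n : ℕ) : Z r (n + 1) = Z r n + X * Z r (n - r) := by
  obtain ⟨N, hN⟩ : ∃ N, N = (n + 1 + r) / (r + 1) + 1 := ⟨_, rfl⟩
  have hN₁ : (n + r) / (r + 1) + 1 ≤ N + 1 := by
    have := Nat.div_le_div_right (c := r + 1) (show n + r ≤ n + 1 + r by omega)
    omega
  have hN₂ : (n - r + r) / (r + 1) + 1 ≤ N := by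
    have := Nat.div_le_div_right (c := r + 1) (show n - r + r ≤ n + 1 + r by omega)
    omega
  have hterm (m : ℕ) :
      C ((n + 1 - r * (m + 1 - 1)).choose (m + 1) : ℝ) * X ^ (m + 1) =
        C ((n - r * (m + 1 - 1)).choose (m + 1) : ℝ) * X ^ (m + 1) +
          X * (C ((n - r - r * (m - 1)).choose m : ℝ) * X ^ m) := by
    rw [Nat.add_sub_cancel, choose_sub_mul_succ, choose_sub_sub_mul_pred, Nat.cast_add, C_add]
    ring
  rw [Z_eq_sum_range r (n + 1) (N + 1) (by omega), Z_eq_sum_range r n (N + 1) hN₁,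
    Z_eq_sum_range r (n - r) N hN₂, Finset.sum_range_succ' _ N, Finset.sum_range_succ' _ N,
    Finset.sum_congr rfl fun m _ => hterm m, Finset.sum_add_distrib, Finset.mul_sum]
  simp only [Nat.choose_zero_right]
  ring

lemma Z_zero (r : ℕ) : Z r 0 = 1 := by
  simp [Z, Nat.div_eq_of_lt (Nat.lt_succ_self r)]

section BlockadeRecurrence

variable {r : ℕ} {y : ℝ} {a : ℕ → ℝ}

lemma pow_mul_sub_le_of_forall_mul_le_succ {c : ℝ} {n : ℕ} (hc₀ : 0 ≤ c) (hc₁ : c ≤ 1)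
    (ha₀ : 0 ≤ a 0) (hstep : ∀ k < n, c * a k ≤ a (k + 1)) (j : ℕ) :
    c ^ j * a (n - j) ≤ a n := by
  induction j with
  | zero => simp
  | succ i ih =>
    rcases lt_or_ge i n with hi | hi
    · calc c ^ (i + 1) * a (n - (i + 1)) = c ^ i * (c * a (n - (i + 1))) := by ring
        _ ≤ c ^ i * a (n - (i + 1) + 1) := by gcongr; exact hstep _ (by omega)
        _ = c ^ i * a (n - i) := by rw [show n - (i + 1) + 1 = n - i by omega]
        _ ≤ a n := ih
    · rw [show n - (i + 1) = n - i by omega]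
      calc c ^ (i + 1) * a (n - i) ≤ c ^ i * a (n - i) := by
            rw [show n - i = 0 by omega]
            exact mul_le_mul_of_nonneg_right (pow_le_pow_of_le_one hc₀ hc₁ i.le_succ) ha₀
        _ ≤ a n := ih

lemma mul_le_succ_of_blockade_recurrence (hrec : ∀ n, a (n + 1) = a n + y * a (n - r))
    (ha₀ : 0 ≤ a 0) (hy : -(r : ℝ) ^ r / ((r : ℝ) + 1) ^ (r + 1) ≤ y) (n : ℕ) :
    r / (r + 1) * a n ≤ a (n + 1) := by
  induction n using Nat.strong_induction_on with
  | _ n ih =>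
    set c : ℝ := r / (r + 1)
    have hc₀ : 0 ≤ c := by positivity
    have hc₁ : c ≤ 1 := div_le_one_of_le₀ (by linarith) (by positivity)
    have hchain : c ^ r * a (n - r) ≤ a n := pow_mul_sub_le_of_forall_mul_le_succ hc₀ hc₁ ha₀ ih r
    have hpos : 0 ≤ a (n - r) := by
      have := pow_mul_sub_le_of_forall_mul_le_succ hc₀ hc₁ ha₀
        (n := n - r) (fun k hk => ih k (by omega)) (n - r)
      rw [Nat.sub_self] at this
      exact (mul_nonneg (pow_nonneg hc₀ _) ha₀).trans this
    have hy' : -(c ^ r / (r + 1)) ≤ y := by rwa [div_pow, div_div, ← pow_succ, ← neg_div]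
    calc c * a n = a n - a n / (r + 1) := by simp only [c]; field_simp; ring
      _ ≤ a n - c ^ r * a (n - r) / (r + 1) := by gcongr
      _ = a n + -(c ^ r / (r + 1)) * a (n - r) := by ring
      _ ≤ a n + y * a (n - r) := by gcongr
      _ = a (n + 1) := (hrec n).symm

lemma pos_of_blockade_recurrence (hr : 1 ≤ r) (hrec : ∀ n, a (n + 1) = a n + y * a (n - r))
    (ha₀ : 0 < a 0) (hy : -(r : ℝ) ^ r / ((r : ℝ) + 1) ^ (r + 1) ≤ y) (n : ℕ) : 0 < a n := by
  have hc₀ : (0 : ℝ) < r / (r + 1) := by positivity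
  have hc₁ : (r : ℝ) / (r + 1) ≤ 1 := div_le_one_of_le₀ (by linarith) (by positivity)
  have hchain := pow_mul_sub_le_of_forall_mul_le_succ hc₀.le hc₁ ha₀.le (n := n)
    (fun k _ => mul_le_succ_of_blockade_recurrence hrec ha₀.le hy k) n
  rw [Nat.sub_self] at hchain
  exact (mul_pos (pow_pos hc₀ n) ha₀).trans_le hchain

lemma succ_lt_one_add_mul_of_blockade_recurrence (hr : 1 ≤ r)
    (hrec : ∀ n, a (n + 1) = a n + y * a (n - r)) (ha₀ : 0 < a 0)
    (hy₀ : -(r : ℝ) ^ r / ((r : ℝ) + 1) ^ (r + 1) ≤ y) (hy₁ : y < 0) {n : ℕ} (hn : 1 ≤ n) :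
    a (n + 1) < (1 + y) * a n := by
  have hpos := pos_of_blockade_recurrence hr hrec ha₀ hy₀
  have hanti : StrictAnti a := strictAnti_nat_of_succ_lt fun k => by
    rw [hrec k]
    linarith [mul_neg_of_neg_of_pos hy₁ (hpos (k - r))]
  calc a (n + 1) = a n + y * a (n - r) := hrec n
    _ < a n + y * a n := by gcongr ?_ + ?_; exact mul_lt_mul_of_neg_left (hanti (by omega)) hy₁
    _ = (1 + y) * a n := by ring

end BlockadeRecurrence

/-- For every integer `r ≥ 1`, every `n ≥ r+1`, and every real `y` with
`-r^r/(r+1)^{r+1} ≤ y < 0`, one has `Z_{n+1}(y) < (1+y)·Z_n(y)`. -/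
theorem Z_ratio_upper_bound (r n : ℕ) (hr : 1 ≤ r) (hn : r + 1 ≤ n) (y : ℝ)
    (hy0 : -(r : ℝ) ^ r / ((r : ℝ) + 1) ^ (r + 1) ≤ y) (hy1 : y < 0) :
    (Z r (n + 1)).eval y < (1 + y) * (Z r n).eval y := by
  have hrec (k : ℕ) : (Z r (k + 1)).eval y = (Z r k).eval y + y * (Z r (k - r)).eval y := by
    rw [Z_succ, eval_add, eval_mul, eval_X]
  exact succ_lt_one_add_mul_of_blockade_recurrence (a := fun k => (Z r k).eval y) hr hrec (by simp [Z_zero]) hy0 hy1 (by omega)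
end

section
/- (Corollary) For every integer r ≥ 1 and every real y with -r^r/(r+1)^{r+1} ≤ y < 0, the sequence of partition function values Z_n(y) tends to 0 as n → ∞. -/
open Polynomial Finset

set_option maxHeartbeats 1000000

noncomputable def Zs (r : ℕ) (y : ℝ) (n : ℕ) : ℝ :=
  ∑ m ∈ Finset.range (n + 1), (Nat.choose (n - r * (m - 1)) m : ℝ) * y ^ m

lemma choose_big_zero (r n m : ℕ) (hm : (n + r) / (r + 1) < m) :
    Nat.choose (n - r * (m - 1)) m = 0 := by
  apply Nat.choose_eq_zero_of_lt
  have h1 : n + r < m * (r + 1) := (Nat.div_lt_iff_lt_mul (by omega)).mp hm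
  rcases m with _ | k
  · omega
  · have h3 : (k+1)*(r+1) = r*k + (k + r + 1) := by ring
    simp only [Nat.add_sub_cancel]
    omega

lemma choose_rec (r n k : ℕ) :
    Nat.choose (n + r + 1 - r * k) (k+1)
      = Nat.choose (n + r - r * k) (k+1) + Nat.choose (n - r * (k-1)) k := by
  match k with
  | 0 => simp [Nat.choose_one_right]
  | (j+1) =>
    have e0 : r * (j+1) = r * j + r := by ring
    simp only [Nat.add_sub_cancel, e0]
    rcases le_or_gt (r * j) n with h | h
    · have e1 : n + r + 1 - (r*j + r) = (n - r*j) + 1 := by omega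
      have e2 : n + r - (r*j + r) = n - r*j := by omega
      rw [e1, e2, Nat.choose_succ_succ]
      simp only [Nat.succ_eq_add_one]
      omega
    · have e1 : n + r + 1 - (r*j + r) = 0 := by omega
      have e2 : n + r - (r*j + r) = 0 := by omega
      have e3 : n - r*j = 0 := by omega
      rw [e1, e2, e3]
      simp

lemma Zs_eval (r : ℕ) (hr : 1 ≤ r) (n : ℕ) (y : ℝ) : (Z r n).eval y = Zs r y n := by
  unfold Z Zs
  rw [eval_finset_sum]
  simp only [eval_mul, eval_pow, eval_C, eval_X]
  apply Finset.sum_subset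
  · apply Finset.range_subset_range.mpr
    have : (n + r) / (r + 1) < n + 1 := by
      rw [Nat.div_lt_iff_lt_mul (by omega)]
      have : (n+1)*(r+1) = n*r + (n + r + 1) := by ring
      omega
    omega
  · intro m _ hm
    rw [Finset.mem_range, not_lt] at hm
    rw [choose_big_zero r n m (by omega)]
    simp

lemma Zs_small (r : ℕ) (y : ℝ) (hr : 1 ≤ r) (n : ℕ) (hn : n ≤ r + 1) :
    Zs r y n = 1 + n * y := by
  unfold Zs
  rcases Nat.eq_zero_or_pos n with h0 | h0
  · subst h0; simp
  · rw [← Finset.sum_subset (Finset.range_subset_range.mpr (show 2 ≤ n+1 by omega))]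
    · rw [Finset.sum_range_succ, Finset.sum_range_one]
      simp [Nat.choose_one_right]
    · intro m _ hm
      rw [Finset.mem_range, not_lt] at hm
      have h1 : r ≤ r * (m - 1) := Nat.le_mul_of_pos_right r (by omega)
      have h2 : n - r * (m-1) < m := by omega
      rw [Nat.choose_eq_zero_of_lt h2]
      simp

lemma Zs_rec (r : ℕ) (y : ℝ) (hr : 1 ≤ r) (n : ℕ) :
    Zs r y (n + r + 1) = Zs r y (n + r) + y * Zs r y n := by
  unfold Zs
  rw [Finset.sum_range_succ' _ (n + r + 1)]
  conv_rhs => rw [Finset.sum_range_succ' _ (n + r)]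
  simp only [Nat.add_sub_cancel, Nat.zero_sub, Nat.mul_zero, Nat.sub_zero,
    Nat.choose_zero_right, Nat.cast_one, pow_zero, mul_one]
  have hterm : ∀ i, ((Nat.choose (n + r + 1 - r * i) (i+1) : ℝ)) * y ^ (i+1)
      = (Nat.choose (n + r - r * i) (i+1) : ℝ) * y ^ (i+1)
        + (Nat.choose (n - r * (i-1)) i : ℝ) * y ^ (i+1) := by
    intro i
    rw [choose_rec r n i]
    push_cast
    ring
  rw [Finset.sum_congr rfl (fun i _ => hterm i), Finset.sum_add_distrib]
  rw [Finset.sum_range_succ (fun i => (Nat.choose (n + r - r * i) (i+1) : ℝ) * y ^ (i+1)) (n+r)]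
  have hz1 : (Nat.choose (n + r - r * (n+r)) (n+r+1) : ℝ) = 0 := by
    rw [Nat.choose_eq_zero_of_lt (by omega)]; simp
  rw [hz1]
  have hz2 : ∑ i ∈ Finset.range (n + r + 1), (Nat.choose (n - r * (i-1)) i : ℝ) * y ^ (i+1)
      = ∑ i ∈ Finset.range (n + 1), (Nat.choose (n - r * (i-1)) i : ℝ) * y ^ (i+1) := by
    rw [← Finset.sum_subset (Finset.range_subset_range.mpr (show n+1 ≤ n+r+1 by omega))]
    intro m _ hm
    rw [Finset.mem_range, not_lt] at hm
    rw [Nat.choose_eq_zero_of_lt (by omega)]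
    simp
  rw [hz2, Finset.mul_sum]
  have : ∀ m, y * ((Nat.choose (n - r * (m-1)) m : ℝ) * y ^ m)
      = (Nat.choose (n - r * (m-1)) m : ℝ) * y ^ (m+1) := by intro m; ring
  simp only [this]
  ring

/-- Corollary: For every integer `r ≥ 1` and every real `y` with
`-r^r/(r+1)^{r+1} ≤ y < 0`, the sequence `Z_n(y)` tends to `0` as `n → ∞`. -/
theorem Z_tendsto_zero (r : ℕ) (hr : 1 ≤ r) (y : ℝ)
    (hy0 : -(r : ℝ) ^ r / ((r : ℝ) + 1) ^ (r + 1) ≤ y) (hy1 : y < 0) :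
    Filter.Tendsto (fun n : ℕ => (Z r n).eval y) Filter.atTop (nhds 0) := by
  have hr0 : (0:ℝ) < (r:ℝ) := by exact_mod_cast hr
  have hr1 : (0:ℝ) < (r:ℝ) + 1 := by linarith
  -- existence of x
  set a : ℝ := (r:ℝ) / ((r:ℝ) + 1) with ha
  have ha0 : 0 < a := div_pos hr0 hr1
  have ha1 : a ≤ 1 := by
    rw [div_le_one hr1]; linarith
  have hga : a ^ r * (1 - a) = (r:ℝ)^r / ((r:ℝ)+1)^(r+1) := by
    rw [ha, div_pow]
    field_simp
    ring
  obtain ⟨x, hxmem, hgx⟩ : ∃ x ∈ Set.Icc a 1, x ^ r * (1 - x) = -y := by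
    have hc : ContinuousOn (fun t : ℝ => t ^ r * (1 - t)) (Set.Icc a 1) :=
      ((continuous_pow r).mul (continuous_const.sub continuous_id)).continuousOn
    have := intermediate_value_Icc' ha1 hc
    have hmem : -y ∈ Set.Icc ((1:ℝ)^r * (1-1)) (a ^ r * (1 - a)) := by
      constructor
      · simp; linarith
      · rw [hga]
        rw [le_div_iff₀ (by positivity), neg_mul]
        rw [div_le_iff₀ (by positivity)] at hy0
        linarith [hy0]
    obtain ⟨x, hx, hfx⟩ := this hmem
    exact ⟨x, hx, hfx⟩
  obtain ⟨hax, hx2⟩ := hxmem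
  have hx0 : (0:ℝ) ≤ x := le_trans ha0.le hax
  have h1x : (0:ℝ) ≤ 1 - x := by linarith
  -- key geometric inequality
  have hkey : (r:ℝ) * (x^r * (1-x)) ≤ 1 - x^r := by
    have h7 : (r:ℝ) * x^r ≤ ∑ i ∈ Finset.range r, x^i := by
      calc (r:ℝ) * x^r = ∑ _i ∈ Finset.range r, x^r := by
            simp [Finset.sum_const, mul_comm]
        _ ≤ ∑ i ∈ Finset.range r, x^i :=
            Finset.sum_le_sum (fun i hi =>
              pow_le_pow_of_le_one hx0 hx2 (le_of_lt (Finset.mem_range.mp hi)))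
    have hgeom : (1 - x) * ∑ i ∈ Finset.range r, x^i = 1 - x^r := by
      linear_combination -(geom_sum_mul x r)
    nlinarith [mul_le_mul_of_nonneg_left h7 h1x]
  -- 0 ≤ 1 + (r+1) y
  have hxr : (0:ℝ) ≤ x ^ r := pow_nonneg hx0 r
  have hxx : x ^ r * (1 - x) ≤ x ^ r := by nlinarith [hxr, hx0]
  have hr_eq : (r:ℝ) * (x ^ r * (1 - x)) = (r:ℝ) * (-y) := by rw [hgx]
  have hbase : 0 ≤ 1 + ((r:ℝ)+1) * y := by nlinarith [hkey, hr_eq, hxx, hgx]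
  have h1y : 0 ≤ 1 + y := by nlinarith [hbase, hy1]
  -- main induction: nonnegativity and ratio
  have main : ∀ n, 0 ≤ Zs r y n ∧ x * Zs r y n ≤ Zs r y (n+1) := by
    intro n
    induction n using Nat.strong_induction_on with
    | _ n IH =>
      by_cases hn : n ≤ r
      · -- base case
        rw [Zs_small r y hr n (by omega), Zs_small r y hr (n+1) (by omega)]
        have hnr : (n:ℝ) ≤ (r:ℝ) := by exact_mod_cast hn
        have hnn : (0:ℝ) ≤ (n:ℝ) := Nat.cast_nonneg n
        have hpos : 0 ≤ 1 + (n:ℝ) * y := by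
          nlinarith [hbase, hy1, hnr]
        constructor
        · exact hpos
        · push_cast
          have h5 : (n:ℝ) * (x ^ r * (1 - x)) ≤ 1 - x ^ r := by
            nlinarith [hkey, mul_nonneg hxr h1x, hnr]
          have h6 : 0 ≤ (1 - x) * (1 - x ^ r - (n:ℝ) * (x ^ r * (1 - x))) :=
            mul_nonneg h1x (by linarith [h5])
          have hy_eq : y = -(x ^ r * (1 - x)) := by linarith [hgx]
          rw [hy_eq]
          nlinarith [h6]
      · push_neg at hn
        have hchain : ∀ k j, j + k ≤ n → x ^ k * Zs r y j ≤ Zs r y (j + k) := by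
          intro k
          induction k with
          | zero => intro j _; simpa using le_refl (Zs r y j)
          | succ k ih =>
            intro j hj
            have h1 : x ^ k * Zs r y j ≤ Zs r y (j + k) := ih j (by omega)
            have h2 : x * Zs r y (j + k) ≤ Zs r y (j + k + 1) := (IH (j+k) (by omega)).2
            calc x ^ (k+1) * Zs r y j = x * (x ^ k * Zs r y j) := by ring
              _ ≤ x * Zs r y (j + k) := mul_le_mul_of_nonneg_left h1 hx0
              _ ≤ Zs r y (j + (k+1)) := by rw [show j + (k+1) = j + k + 1 from rfl]; exact h2
        have hrec : Zs r y (n + 1) = Zs r y n + y * Zs r y (n - r) := by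
          have h := Zs_rec r y hr (n - r)
          have e1 : n - r + r + 1 = n + 1 := by omega
          have e2 : n - r + r = n := by omega
          rw [e1, e2] at h
          exact h
        have hSn : 0 ≤ Zs r y n := by
          have h1 := IH (n-1) (by omega)
          have e : n - 1 + 1 = n := by omega
          rw [e] at h1
          exact le_trans (mul_nonneg hx0 h1.1) h1.2
        refine ⟨hSn, ?_⟩
        have hch := hchain r (n - r) (by omega)
        rw [show n - r + r = n from by omega] at hch
        have hS0 : 0 ≤ Zs r y (n - r) := (IH (n-r) (by omega)).1
        rw [hrec]
        have hy_eq : y * Zs r y (n - r) = -((1-x) * (x ^ r * Zs r y (n - r))) := by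
          have : y = -(x ^ r * (1 - x)) := by linarith [hgx]
          rw [this]; ring
        have hmul : (1-x) * (x ^ r * Zs r y (n - r)) ≤ (1-x) * Zs r y n :=
          mul_le_mul_of_nonneg_left hch h1x
        linarith [hmul, hy_eq]
  -- monotonicity
  have mono : ∀ n, Zs r y (n+1) ≤ Zs r y n := by
    intro n
    by_cases hn : n ≤ r
    · rw [Zs_small r y hr n (by omega), Zs_small r y hr (n+1) (by omega)]
      push_cast
      nlinarith [hy1]
    · push_neg at hn
      have hrec : Zs r y (n + 1) = Zs r y n + y * Zs r y (n - r) := by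
        have h := Zs_rec r y hr (n - r)
        have e1 : n - r + r + 1 = n + 1 := by omega
        have e2 : n - r + r = n := by omega
        rw [e1, e2] at h
        exact h
      rw [hrec]
      nlinarith [(main (n-r)).1, hy1]
  have mono' : Antitone (Zs r y) := antitone_nat_of_succ_le mono
  -- decay
  have dec : ∀ k, Zs r y ((r+1)*k) ≤ (1+y)^k := by
    intro k
    induction k with
    | zero => simp [Zs_small r y hr 0 (by omega)]
    | succ k ih =>
      have hrec := Zs_rec r y hr ((r+1)*k)
      have e : (r+1)*k + r + 1 = (r+1)*(k+1) := by ring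
      rw [e] at hrec
      have hm1 : Zs r y ((r+1)*k + r) ≤ Zs r y ((r+1)*k) := mono' (by omega)
      have hyz : y * Zs r y ((r+1)*k) ≤ y * Zs r y ((r+1)*k + r) := by
        nlinarith [hm1, hy1]
      have h8 : Zs r y ((r+1)*(k+1)) ≤ (1+y) * Zs r y ((r+1)*k + r) := by
        rw [hrec]; nlinarith [hyz, mono' (show (r+1)*k + r ≤ (r+1)*k + r + 1 by omega)]
      calc Zs r y ((r+1)*(k+1)) ≤ (1+y) * Zs r y ((r+1)*k + r) := h8
        _ ≤ (1+y) * Zs r y ((r+1)*k) := mul_le_mul_of_nonneg_left hm1 h1y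
        _ ≤ (1+y) * (1+y)^k := mul_le_mul_of_nonneg_left ih h1y
        _ = (1+y)^(k+1) := by rw [pow_succ]; ring
  -- squeeze
  have upper : ∀ n, Zs r y n ≤ (1+y)^(n/(r+1)) := by
    intro n
    exact le_trans (mono' (show (r+1)*(n/(r+1)) ≤ n by
      calc (r+1)*(n/(r+1)) = n/(r+1)*(r+1) := by ring
        _ ≤ n := Nat.div_mul_le_self n (r+1))) (dec (n/(r+1)))
  have hto : Filter.Tendsto (fun n : ℕ => (1+y)^(n/(r+1))) Filter.atTop (nhds 0) := by
    have h1 : Filter.Tendsto (fun k : ℕ => (1+y)^k) Filter.atTop (nhds 0) :=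
      tendsto_pow_atTop_nhds_zero_of_lt_one h1y (by linarith)
    have h2 : Filter.Tendsto (fun n : ℕ => n/(r+1)) Filter.atTop Filter.atTop :=
      Filter.tendsto_atTop_atTop.mpr (fun b => ⟨b*(r+1), fun c hc =>
        (Nat.le_div_iff_mul_le (by omega)).mpr hc⟩)
    exact h1.comp h2
  have hZ : Filter.Tendsto (Zs r y) Filter.atTop (nhds 0) :=
    tendsto_of_tendsto_of_tendsto_of_le_of_le tendsto_const_nhds hto
      (fun n => (main n).1) upper
  exact hZ.congr (fun n => (Zs_eval r hr n y).symm)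
end

section
/- For blockade radius r = 1 and every n ≥ 1, every real zero y of the polynomial Z_n satisfies y < -1/4. -/
open Polynomial

/-- coefficient of `y^m` in `Z 1 n`. -/
def cc (n m : ℕ) : ℕ := Nat.choose (n - (m - 1)) m

lemma cc_zero (n m : ℕ) (h : n + 1 < 2 * m) : cc n m = 0 := by
  apply Nat.choose_eq_zero_of_lt; omega

lemma cc_rec (n k : ℕ) : cc (n+2) (k+1) = cc (n+1) (k+1) + cc n k := by
  unfold cc
  rcases k with _ | j
  · simp [Nat.choose_one_right]
  rcases le_or_gt j n with h | h
  · have h1 : n + 2 - (j + 1 + 1 - 1) = (n - j) + 1 := by omega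
    have h2 : n + 1 - (j + 1 + 1 - 1) = n - j := by omega
    have h3 : n - (j + 1 - 1) = n - j := by omega
    rw [h1, h2, h3, Nat.choose_succ_succ, Nat.add_comm]
  · rw [Nat.choose_eq_zero_of_lt (by omega), Nat.choose_eq_zero_of_lt (by omega),
        Nat.choose_eq_zero_of_lt (by omega)]

/-- The evaluation of `Z 1 n` at `y`, written as a sum over a range that is large enough
for all the coefficient manipulations below (the extra coefficients vanish). -/
noncomputable def E (y : ℝ) (n : ℕ) : ℝ := ∑ m ∈ Finset.range (n + 2), (cc n m : ℝ) * y ^ m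

lemma E_eq_big (y : ℝ) (n K : ℕ) (hK : n + 2 ≤ K) :
    E y n = ∑ m ∈ Finset.range K, (cc n m : ℝ) * y ^ m := by
  apply Finset.sum_subset (Finset.range_subset_range.mpr hK)
  intro m hm hm'
  simp only [Finset.mem_range] at hm hm'
  rw [cc_zero n m (by omega)]
  simp

lemma Z_eval_s19 (y : ℝ) (n : ℕ) : (Z 1 n).eval y = E y n := by
  rw [Z, E]
  simp only [eval_finset_sum, eval_mul, eval_C, eval_pow, eval_X, one_mul]
  apply Finset.sum_subset
  · apply Finset.range_subset_range.mpr; omega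
  · intro m hm hm'
    simp only [Finset.mem_range] at hm hm'
    have : cc n m = 0 := cc_zero n m (by omega)
    show ((cc n m : ℝ)) * y ^ m = 0
    rw [this]; simp

/-- The Fibonacci-like recurrence `Z_{n+2}(y) = Z_{n+1}(y) + y·Z_n(y)`. -/
lemma E_rec (y : ℝ) (n : ℕ) : E y (n+2) = E y (n+1) + y * E y n := by
  rw [E, E_eq_big y (n+1) (n+4) (by omega), E_eq_big y n (n+3) (by omega)]
  rw [Finset.sum_range_succ' _ (n+3), Finset.sum_range_succ' (fun m => (cc (n+1) m : ℝ) * y ^ m) (n+3)]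
  rw [Finset.mul_sum]
  have h0 : cc (n+2) 0 = cc (n+1) 0 := rfl
  rw [h0]
  have : ∀ k ∈ Finset.range (n+3), ((cc (n+2) (k+1) : ℝ)) * y ^ (k+1)
      = (cc (n+1) (k+1) : ℝ) * y ^ (k+1) + y * ((cc n k : ℝ) * y ^ k) := by
    intro k _
    rw [cc_rec]
    push_cast
    ring
  rw [Finset.sum_congr rfl this, Finset.sum_add_distrib]
  ring

/-- For `y ≥ -1/4`, the partition function stays positive (with a two-term invariant). -/
lemma E_pos (y : ℝ) (hy : -(1/4 : ℝ) ≤ y) : ∀ n, 0 < E y n ∧ E y n ≤ 2 * E y (n+1) := by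
  have e0 : E y 0 = 1 := by simp [E, Finset.sum_range_succ, cc]
  have e1 : E y 1 = 1 + y := by
    simp [E, Finset.sum_range_succ, cc]
  intro n
  induction n with
  | zero => constructor <;> nlinarith
  | succ n ih =>
    obtain ⟨h1, h2⟩ := ih
    have h3 : 0 < E y (n+1) := by nlinarith
    constructor
    · exact h3
    · rw [E_rec]
      nlinarith

/-- For blockade radius `r = 1` and every `n ≥ 1`, every real zero `y` of
the polynomial `Z_n` satisfies `y < -1/4`. -/
theorem Z_zeros_lt_quarter_r1 (n : ℕ) (hn : 1 ≤ n) (y : ℝ) (hy : (Z 1 n).IsRoot y) :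
    y < -(1 / 4 : ℝ) := by
  by_contra h
  push_neg at h
  have := (E_pos y h n).1
  rw [IsRoot, Z_eval_s19] at hy
  linarith
end
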